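/- arXiv:1001.5008 — 2 statements merged into one kernel-verified Lean document; each statement's English description precedes it below -/
import Mathlib

section
/- With notation as above, the short exact sequence 0 → H → Λ³H → Λ³H/(θ̌∧H) → 0 of A-modules admits an A-linear splitting that is equivariant for the symplectic group Sp(H_A) if and only if g−1 is a unit in A. -/
/-!
Contraction with `θ`, `x ∧ y ∧ z ↦ θ(x,y) z - θ(x,z) y + θ(y,z) x`, is an `Sp(H)`-equivariant
map `Λ³H → H` sending `x ∧ θ̌` to `(g - 1) x`, so a unit `g - 1` yields the splitting.

Conversely, write `aᵢ, bᵢ` for the symplectic basis, let `r` be an equivariant retraction, fix an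
index `i₀` and put `eᵢ = a_{i₀} ∧ aᵢ ∧ bᵢ`, so that `a_{i₀} ∧ θ̌ = ∑_{i ≠ i₀} eᵢ`. The symplectic
permutations of the basis that fix `a_{i₀}` and `b_{i₀}` show that `θ(r eᵢ, b_{i₀})` does not depend on `i ≠ i₀`, and
pairing `r (a_{i₀} ∧ θ̌) = a_{i₀}` with `b_{i₀}` gives `(g - 1) θ(r eᵢ, b_{i₀}) = 1`.
-/

open ExteriorAlgebra

theorem exteriorPower.coe_map {R M N : Type*} [CommRing R] [AddCommGroup M] [Module R M]
    [AddCommGroup N] [Module R N] (n : ℕ) (f : M →ₗ[R] N) (ω : ⋀[R]^n M) :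
    (map n f ω : ExteriorAlgebra R N) = ExteriorAlgebra.map f ω := by
  have : (⋀[R]^n N).subtype ∘ₗ map n f =
      (ExteriorAlgebra.map f).toLinearMap ∘ₗ (⋀[R]^n M).subtype := by
    ext v
    simp [ExteriorAlgebra.map_apply_ιMulti]
  exact congr($this ω)

section

variable {A H : Type*} [CommRing A] [AddCommGroup H] [Module A H]

structure IsSymplecticBasis {ι : Type*} [DecidableEq ι] (θ : H →ₗ[A] H →ₗ[A] A)
    (b : Module.Basis (ι ⊕ ι) A H) : Prop where
  inl_inr : ∀ i j, θ (b (.inl i)) (b (.inr j)) = if i = j then 1 else 0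
  inl_inl : ∀ i j, θ (b (.inl i)) (b (.inl j)) = 0
  inr_inr : ∀ i j, θ (b (.inr i)) (b (.inr j)) = 0

namespace IsSymplecticBasis

variable {ι : Type*} [DecidableEq ι] {θ : H →ₗ[A] H →ₗ[A] A} {b : Module.Basis (ι ⊕ ι) A H}

theorem inr_inl (hθ : θ.IsAlt) (hb : IsSymplecticBasis θ b) (i j : ι) :
    θ (b (.inr i)) (b (.inl j)) = -if j = i then 1 else 0 := by
  rw [← hθ.neg, hb.inl_inr]

theorem apply_inr (hb : IsSymplecticBasis θ b) (x : H) (i : ι) :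
    θ x (b (.inr i)) = b.repr x (.inl i) := by
  suffices θ.flip (b (.inr i)) = Finsupp.lapply (.inl i) ∘ₗ b.repr.toLinearMap from
    congr($this x)
  refine b.ext fun m => ?_
  rcases m with p | p <;> simp [hb.inl_inr, hb.inr_inr, Finsupp.single_apply, eq_comm]

theorem apply_inl (hθ : θ.IsAlt) (hb : IsSymplecticBasis θ b) (x : H) (i : ι) :
    θ x (b (.inl i)) = -b.repr x (.inr i) := by
  suffices θ.flip (b (.inl i)) = -(Finsupp.lapply (.inr i) ∘ₗ b.repr.toLinearMap) from
    congr($this x)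
  refine b.ext fun m => ?_
  rcases m with p | p <;> simp [hb.inl_inl, hb.inr_inl hθ, Finsupp.single_apply, eq_comm]

theorem sum_smul_sub_smul [Fintype ι] (hθ : θ.IsAlt) (hb : IsSymplecticBasis θ b) (x : H) :
    ∑ i, (θ x (b (.inr i)) • b (.inl i) - θ x (b (.inl i)) • b (.inr i)) = x := by
  calc _ = ∑ i, (b.repr x (.inl i) • b (.inl i) + b.repr x (.inr i) • b (.inr i)) := by
        simp [hb.apply_inr, hb.apply_inl hθ]
    _ = x := by
        rw [Finset.sum_add_distrib, ← Fintype.sum_sum_type fun m => b.repr x m • b m, b.sum_repr]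

theorem isOrthogonal_equiv_sumCongr (hθ : θ.IsAlt) (hb : IsSymplecticBasis θ b)
    (τ : Equiv.Perm ι) : θ.IsOrthogonal (b.equiv b (τ.sumCongr τ)) := by
  suffices θ.compl₁₂ (b.equiv b (τ.sumCongr τ)).toLinearMap
      (b.equiv b (τ.sumCongr τ)).toLinearMap = θ from fun x y => congr($this x y)
  refine LinearMap.ext_basis b b fun m m' => ?_
  rcases m with p | p <;> rcases m' with q | q <;>
    simp [hb.inl_inr, hb.inl_inl, hb.inr_inr, hb.inr_inl hθ]

end IsSymplecticBasis

section Contraction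

variable (θ : H →ₗ[A] H →ₗ[A] A) (hθ : θ.IsAlt)

/- The `DecidableEq (Fin 3)` instance in the fields below is a bound variable, which the kernel
cannot evaluate; `Fin.ext_iff` moves the index comparisons to `ℕ`. -/
def contraction : H [⋀^Fin 3]→ₗ[A] H where
  toFun v := θ (v 0) (v 1) • v 2 - θ (v 0) (v 2) • v 1 + θ (v 1) (v 2) • v 0
  map_update_add' v i x y := by
    fin_cases i <;> simp [Fin.ext_iff, add_smul, smul_add] <;> abel
  map_update_smul' v i c x := by
    fin_cases i <;> simp [Fin.ext_iff, smul_smul, smul_sub, smul_add, mul_comm c]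
  map_eq_zero_of_eq' v i j h hij := by
    fin_cases i <;> fin_cases j <;> simp_all [hθ.self_eq_zero, ← hθ.neg (v 1)]

noncomputable def wedgeContraction : ⋀[A]^3 H →ₗ[A] H :=
  exteriorPower.alternatingMapLinearEquiv (contraction θ hθ)

theorem wedgeContraction_ιMulti (v : Fin 3 → H) :
    wedgeContraction θ hθ (exteriorPower.ιMulti A 3 v) =
      θ (v 0) (v 1) • v 2 - θ (v 0) (v 2) • v 1 + θ (v 1) (v 2) • v 0 := by
  rw [wedgeContraction, exteriorPower.alternatingMapLinearEquiv_apply_ιMulti]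
  rfl

variable {θ} in
theorem wedgeContraction_map {φ : H →ₗ[A] H} (hφ : θ.IsOrthogonal φ) (ω : ⋀[A]^3 H) :
    wedgeContraction θ hθ (exteriorPower.map 3 φ ω) = φ (wedgeContraction θ hθ ω) := by
  suffices wedgeContraction θ hθ ∘ₗ exteriorPower.map 3 φ = φ ∘ₗ wedgeContraction θ hθ from
    congr($this ω)
  ext v
  simp [wedgeContraction_ιMulti, hφ (v _)]

end Contraction

variable {ι : Type*} [Fintype ι] [DecidableEq ι]

/-- `x ∧ θ̌`, where `θ̌ = ∑ᵢ aᵢ ∧ bᵢ` for the symplectic basis `aᵢ = b (inl i)`, `bᵢ = b (inr i)`. -/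
noncomputable def wedgeDual (b : Module.Basis (ι ⊕ ι) A H) (x : H) : ⋀[A]^3 H :=
  ∑ i, exteriorPower.ιMulti A 3 ![x, b (.inl i), b (.inr i)]

variable {θ : H →ₗ[A] H →ₗ[A] A} {b : Module.Basis (ι ⊕ ι) A H}

theorem wedgeContraction_wedgeDual (hθ : θ.IsAlt) (hb : IsSymplecticBasis θ b) (x : H) :
    wedgeContraction θ hθ (wedgeDual b x) = ((Fintype.card ι : A) - 1) • x := by
  have hsum : ∑ i, (θ x (b (.inl i)) • b (.inr i) - θ x (b (.inr i)) • b (.inl i)) = -x := by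
    calc _ = -∑ i, (θ x (b (.inr i)) • b (.inl i) - θ x (b (.inl i)) • b (.inr i)) := by
          simp_rw [← Finset.sum_neg_distrib, neg_sub]
      _ = -x := by rw [hb.sum_smul_sub_smul hθ]
  simp only [wedgeDual, map_sum, wedgeContraction_ιMulti]
  simp [hb.inl_inr, Finset.sum_add_distrib, hsum, sub_smul, neg_add_eq_sub,
    Nat.cast_smul_eq_nsmul]

open Finset in
theorem isUnit_card_sub_one_of_retraction (hθ : θ.IsAlt) (hb : IsSymplecticBasis θ b)
    {r : ⋀[A]^3 H →ₗ[A] H} (hr : ∀ x, r (wedgeDual b x) = x)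
    (hequiv : ∀ φ : H ≃ₗ[A] H, θ.IsOrthogonal φ → ∀ ω, r (exteriorPower.map 3 φ ω) = φ (r ω)) :
    IsUnit ((Fintype.card ι : A) - 1) := by
  rcases isEmpty_or_nonempty ι with hι | ⟨⟨i₀⟩⟩
  · simp
  set e : ι → ⋀[A]^3 H := fun i => exteriorPower.ιMulti A 3 ![b (.inl i₀), b (.inl i), b (.inr i)]
  set f : ι → A := fun i => θ (r (e i)) (b (.inr i₀))
  have he₀ : e i₀ = 0 := AlternatingMap.map_eq_zero_of_eq _ _ (i := 0) (j := 1) rfl (by decide)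
  have hsum : ∑ i ∈ univ.erase i₀, f i = 1 := by
    calc _ = θ (r (∑ i, e i)) (b (.inr i₀)) := by
          rw [← sum_erase_add _ _ (mem_univ i₀), he₀, add_zero, map_sum, map_sum,
            LinearMap.sum_apply]
      _ = θ (r (wedgeDual b (b (.inl i₀)))) (b (.inr i₀)) := rfl
      _ = 1 := by rw [hr, hb.inl_inr, if_pos rfl]
  have hconst : ∀ i ∈ univ.erase i₀, ∀ i' ∈ univ.erase i₀, f i = f i' := by
    intro i hi i' hi'
    have hi₀ : i₀ ≠ i := (ne_of_mem_erase hi).symm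
    have hi₀' : i₀ ≠ i' := (ne_of_mem_erase hi').symm
    set φ := b.equiv b ((Equiv.swap i i').sumCongr (Equiv.swap i i'))
    have hφ := hb.isOrthogonal_equiv_sumCongr hθ (Equiv.swap i i')
    have hφe : exteriorPower.map 3 φ (e i) = e i' := by
      simp only [e, φ, exteriorPower.map_apply_ιMulti]
      congr 1
      ext k
      fin_cases k <;> simp [Equiv.swap_apply_of_ne_of_ne, hi₀, hi₀']
    have hφb : φ (b (.inr i₀)) = b (.inr i₀) := by
      simp [φ, Equiv.swap_apply_of_ne_of_ne, hi₀, hi₀']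
    calc f i = θ (φ (r (e i))) (φ (b (.inr i₀))) := (hφ _ _).symm
      _ = f i' := by rw [← hequiv φ hφ, hφe, hφb]
  rcases (univ.erase i₀).eq_empty_or_nonempty with hempty | ⟨i₁, hi₁⟩
  · rw [hempty, sum_empty] at hsum
    have := subsingleton_of_zero_eq_one hsum
    exact isUnit_of_subsingleton _
  · refine .of_mul_eq_one (f i₁) (.trans ?_ hsum)
    rw [sum_congr rfl fun i hi => hconst i hi i₁ hi₁, sum_const, card_erase_of_mem (mem_univ _),
      card_univ, nsmul_eq_mul, Nat.cast_sub (Fintype.card_pos_iff.mpr ⟨i₀⟩), Nat.cast_one]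

theorem exists_equivariant_retraction_iff (hθ : θ.IsAlt) (hb : IsSymplecticBasis θ b) :
    (∃ r : ⋀[A]^3 H →ₗ[A] H, (∀ x, r (wedgeDual b x) = x) ∧
      ∀ φ : H ≃ₗ[A] H, θ.IsOrthogonal φ → ∀ ω, r (exteriorPower.map 3 φ ω) = φ (r ω)) ↔
      IsUnit ((Fintype.card ι : A) - 1) := by
  refine ⟨fun ⟨r, hr, hequiv⟩ => isUnit_card_sub_one_of_retraction hθ hb hr hequiv, ?_⟩
  rintro ⟨u, hu⟩
  refine ⟨(↑u⁻¹ : A) • wedgeContraction θ hθ, fun x => ?_, fun φ hφ ω => ?_⟩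
  · rw [LinearMap.smul_apply, wedgeContraction_wedgeDual hθ hb, ← hu, smul_smul, Units.inv_mul,
      one_smul]
  · rw [LinearMap.smul_apply, LinearMap.smul_apply, wedgeContraction_map hθ hφ, map_smul]
    rfl

end

theorem wedge_cubed_splits_iff_isUnit_general (A : Type*) [CommRing A]
    (g : ℕ)
    (H : Type*) [AddCommGroup H] [Module A H]
    (bas : Module.Basis (Fin g ⊕ Fin g) A H)
    (θ : H →ₗ[A] H →ₗ[A] A)
    (hθalt : ∀ x : H, θ x x = 0)
    (hab : ∀ i j, θ (bas (Sum.inl i)) (bas (Sum.inr j)) = if i = j then 1 else 0)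
    (haa : ∀ i j, θ (bas (Sum.inl i)) (bas (Sum.inl j)) = 0)
    (hbb : ∀ i j, θ (bas (Sum.inr i)) (bas (Sum.inr j)) = 0)
    (j : H →ₗ[A] (⋀[A]^3 H))
    (hj : ∀ x : H, (j x : ExteriorAlgebra A H) =
      ∑ i : Fin g, ιMulti A 3 ![x, bas (Sum.inl i), bas (Sum.inr i)]) :
    (∃ r : (⋀[A]^3 H) →ₗ[A] H,
        (∀ x : H, r (j x) = x) ∧
        ∀ φ : H ≃ₗ[A] H, (∀ x y : H, θ (φ x) (φ y) = θ x y) →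
          ∀ ω ω' : ⋀[A]^3 H,
            (ω' : ExteriorAlgebra A H) =
              ExteriorAlgebra.map (φ : H →ₗ[A] H) (ω : ExteriorAlgebra A H) →
            r ω' = φ (r ω)) ↔
      IsUnit ((g : A) - 1) := by
  have hj' : ∀ x, j x = wedgeDual bas x := fun x => Subtype.ext (by simp [hj, wedgeDual])
  have hmap : ∀ (φ : H ≃ₗ[A] H) (ω ω' : ⋀[A]^3 H),
      (ω' : ExteriorAlgebra A H) = ExteriorAlgebra.map (φ : H →ₗ[A] H) ω ↔
        ω' = exteriorPower.map 3 φ ω := fun φ ω ω' => by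
    rw [← exteriorPower.coe_map, Subtype.ext_iff]
  simp only [hj', hmap, forall_eq]
  exact (exists_equivariant_retraction_iff hθalt ⟨hab, haa, hbb⟩).trans (by rw [Fintype.card_fin])

/-- Lemma 9.4 (second sequence): the short exact sequence
`0 → H → Λ³H → Λ³H/(θ̌∧H) → 0` admits an `Sp(H_A)`-equivariant `A`-linear
splitting (equivalently, an `Sp(H_A)`-equivariant retraction `r : Λ³H → H` of
`j : x ↦ x ∧ θ̌`) if and only if `g − 1` is a unit in `A`. -/
theorem wedge_cubed_splits_iff_isUnit (A : Type*) [CommRing A] [IsDomain A]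
    [CharZero A] (g : ℕ) (hg : 1 ≤ g)
    (H : Type*) [AddCommGroup H] [Module A H]
    (bas : Module.Basis (Fin g ⊕ Fin g) A H)
    (θ : H →ₗ[A] H →ₗ[A] A)
    (hθalt : ∀ x : H, θ x x = 0)
    (hab : ∀ i j, θ (bas (Sum.inl i)) (bas (Sum.inr j)) = if i = j then 1 else 0)
    (haa : ∀ i j, θ (bas (Sum.inl i)) (bas (Sum.inl j)) = 0)
    (hbb : ∀ i j, θ (bas (Sum.inr i)) (bas (Sum.inr j)) = 0)
    (j : H →ₗ[A] (⋀[A]^3 H))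
    (hj : ∀ x : H, (j x : ExteriorAlgebra A H) =
      ∑ i : Fin g, ιMulti A 3 ![x, bas (Sum.inl i), bas (Sum.inr i)]) :
    (∃ r : (⋀[A]^3 H) →ₗ[A] H,
        (∀ x : H, r (j x) = x) ∧
        ∀ φ : H ≃ₗ[A] H, (∀ x y : H, θ (φ x) (φ y) = θ x y) →
          ∀ ω ω' : ⋀[A]^3 H,
            (ω' : ExteriorAlgebra A H) =
              ExteriorAlgebra.map (φ : H →ₗ[A] H) (ω : ExteriorAlgebra A H) →
            r ω' = φ (r ω)) ↔
      IsUnit ((g : A) - 1) :=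
  wedge_cubed_splits_iff_isUnit_general A g H bas θ hθalt hab haa hbb j hj
end

section
/- With notation as above, the short exact sequence 0 → A → Λ²H → Λ²H/(A·θ̌) → 0 of A-modules (where A → Λ²H sends 1 to θ̌) admits an Sp(H_A)-equivariant A-linear splitting if and only if g is a unit in A. -/
/-!
A symplectic-invariant retraction `r` of `A → Λ²H` must take the same value on every
`aᵢ ∧ bᵢ`, since the symplectic automorphism swapping the pairs `(aᵢ, bᵢ)` and `(aⱼ, bⱼ)` moves one
to the other; hence `1 = r(θ̌) = g · r(a₁ ∧ b₁)` and `g` is a unit. Conversely, the contraction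
`x ∧ y ↦ θ(x, y)` is invariant and sends `θ̌` to `g`, so `g⁻¹` times it is a retraction.
-/

open ExteriorAlgebra

namespace exteriorPower

variable {R M N : Type*} [CommRing R] [AddCommGroup M] [Module R M] [AddCommGroup N] [Module R N]

lemma coe_map_s2 (n : ℕ) (f : M →ₗ[R] N) (ω : ⋀[R]^n M) :
    (map n f ω : ExteriorAlgebra R N) = ExteriorAlgebra.map f (ω : ExteriorAlgebra R M) := by
  have : (⋀[R]^n N).subtype ∘ₗ map n f =
      (ExteriorAlgebra.map f).toLinearMap ∘ₗ (⋀[R]^n M).subtype := by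
    ext v
    simp [ExteriorAlgebra.map_apply_ιMulti]
  exact DFunLike.congr_fun this ω

end exteriorPower

namespace LinearMap.IsAlt

variable {R M N : Type*} [CommRing R] [AddCommGroup M] [Module R M] [AddCommGroup N] [Module R N]
  {B : M →ₗ[R] M →ₗ[R] N}

def toAlternatingMap (hB : B.IsAlt) : M [⋀^Fin 2]→ₗ[R] N where
  toFun v := B (v 0) (v 1)
  map_update_add' v i x y := by fin_cases i <;> simp
  map_update_smul' v i c x := by fin_cases i <;> simp
  map_eq_zero_of_eq' v i j hv hij := by
    fin_cases i <;> fin_cases j <;> simp_all [hB.self_eq_zero]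

noncomputable def wedgeContraction (hB : B.IsAlt) : ⋀[R]^2 M →ₗ[R] N :=
  exteriorPower.alternatingMapLinearEquiv hB.toAlternatingMap

@[simp]
lemma wedgeContraction_ιMulti (hB : B.IsAlt) (v : Fin 2 → M) :
    hB.wedgeContraction (exteriorPower.ιMulti R 2 v) = B (v 0) (v 1) :=
  exteriorPower.alternatingMapLinearEquiv_apply_ιMulti _ v

lemma wedgeContraction_map (hB : B.IsAlt) {φ : M →ₗ[R] M} (hφ : ∀ x y, B (φ x) (φ y) = B x y)
    (ω : ⋀[R]^2 M) : hB.wedgeContraction (exteriorPower.map 2 φ ω) = hB.wedgeContraction ω := by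
  have : hB.wedgeContraction ∘ₗ exteriorPower.map 2 φ = hB.wedgeContraction := by
    ext v
    simp [hφ]
  exact DFunLike.congr_fun this ω

end LinearMap.IsAlt

namespace Module.Basis

variable {ι R M N : Type*} [CommRing R] [AddCommGroup M] [Module R M] [AddCommGroup N] [Module R N]

lemma bilin_equiv_apply_equiv (b : Basis ι R M) (π : Equiv.Perm ι) (B : M →ₗ[R] M →ₗ[R] N)
    (h : ∀ k l, B (b (π k)) (b (π l)) = B (b k) (b l)) (x y : M) :
    B (b.equiv b π x) (b.equiv b π y) = B x y := by
  have : B.compl₁₂ (b.equiv b π).toLinearMap (b.equiv b π).toLinearMap = B :=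
    b.ext fun k => b.ext fun l => by simpa using h k l
  exact LinearMap.congr_fun₂ this x y

end Module.Basis

lemma isUnit_card_of_sum_eq_one {ι R : Type*} [Fintype ι] [CommRing R] {f : ι → R}
    (hf : ∀ i j, f i = f j) (h : ∑ i, f i = 1) : IsUnit (Fintype.card ι : R) := by
  cases isEmpty_or_nonempty ι with
  | inl _ =>
    have : Subsingleton R := subsingleton_of_zero_eq_one (by simpa using h)
    exact isUnit_of_subsingleton _
  | inr hne =>
    obtain ⟨i⟩ := hne
    refine .of_mul_eq_one (f i) ?_
    rw [← h, Finset.sum_congr rfl fun j _ => hf j i]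
    simp

lemma LinearMap.IsAlt.apply_basisEquiv_sumCongr {ι R M : Type*} [CommRing R] [AddCommGroup M]
    [Module R M] [DecidableEq ι] {B : M →ₗ[R] M →ₗ[R] R} (hB : B.IsAlt)
    (b : Module.Basis (ι ⊕ ι) R M)
    (hab : ∀ i j, B (b (Sum.inl i)) (b (Sum.inr j)) = if i = j then 1 else 0)
    (haa : ∀ i j, B (b (Sum.inl i)) (b (Sum.inl j)) = 0)
    (hbb : ∀ i j, B (b (Sum.inr i)) (b (Sum.inr j)) = 0) (e : Equiv.Perm ι) (x y : M) :
    B (b.equiv b (e.sumCongr e) x) (b.equiv b (e.sumCongr e) y) = B x y := by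
  refine b.bilin_equiv_apply_equiv _ B (fun k l => ?_) x y
  rcases k with k | k <;> rcases l with l | l
  · simp [haa]
  · simp [hab, e.injective.eq_iff]
  · simp only [Equiv.sumCongr_apply, Sum.map_inr, Sum.map_inl, ← hB.neg (b (Sum.inl _))]
    simp [hab, e.injective.eq_iff]
  · simp [hbb]

theorem wedge_squared_splits_iff_isUnit_general (A : Type*) [CommRing A] (g : ℕ)
    (H : Type*) [AddCommGroup H] [Module A H]
    (bas : Module.Basis (Fin g ⊕ Fin g) A H)
    (θ : H →ₗ[A] H →ₗ[A] A)
    (hθalt : ∀ x : H, θ x x = 0)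
    (hab : ∀ i j, θ (bas (Sum.inl i)) (bas (Sum.inr j)) = if i = j then 1 else 0)
    (haa : ∀ i j, θ (bas (Sum.inl i)) (bas (Sum.inl j)) = 0)
    (hbb : ∀ i j, θ (bas (Sum.inr i)) (bas (Sum.inr j)) = 0)
    (θdual : ⋀[A]^2 H)
    (hθdual : (θdual : ExteriorAlgebra A H) =
      ∑ i : Fin g, ιMulti A 2 ![bas (Sum.inl i), bas (Sum.inr i)]) :
    (∃ r : (⋀[A]^2 H) →ₗ[A] A,
        r θdual = 1 ∧
        ∀ φ : H ≃ₗ[A] H, (∀ x y : H, θ (φ x) (φ y) = θ x y) →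
          ∀ ω ω' : ⋀[A]^2 H,
            (ω' : ExteriorAlgebra A H) =
              ExteriorAlgebra.map (φ : H →ₗ[A] H) (ω : ExteriorAlgebra A H) →
            r ω' = r ω) ↔
      IsUnit (g : A) := by
  have hθ : θ.IsAlt := hθalt
  set σ : Fin g → ⋀[A]^2 H := fun i => exteriorPower.ιMulti A 2 ![bas (.inl i), bas (.inr i)]
  have hθσ : θdual = ∑ i, σ i := Subtype.ext (by simp [σ, hθdual])
  constructor
  · rintro ⟨r, hr, hinv⟩
    have hσ (i j : Fin g) : r (σ i) = r (σ j) := by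
      let φ := bas.equiv bas ((Equiv.swap i j).sumCongr (Equiv.swap i j))
      refine hinv φ (hθ.apply_basisEquiv_sumCongr bas hab haa hbb _) (σ j) (σ i) ?_
      have hφσ : σ i = exteriorPower.map 2 (φ : H →ₗ[A] H) (σ j) := by
        rw [exteriorPower.map_apply_ιMulti]
        refine congrArg (exteriorPower.ιMulti A 2) (funext fun k => ?_)
        fin_cases k <;> simp [φ]
      rw [hφσ, exteriorPower.coe_map_s2]
    simpa using isUnit_card_of_sum_eq_one hσ (by rw [← hr, hθσ, map_sum])
  · rintro ⟨u, hu⟩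
    refine ⟨(↑u⁻¹ : A) • hθ.wedgeContraction, ?_, fun φ hφ ω ω' h => ?_⟩
    · simp [hθσ, σ, hab, ← hu]
    · have hω' : ω' = exteriorPower.map 2 (φ : H →ₗ[A] H) ω :=
        Subtype.ext (h.trans (exteriorPower.coe_map_s2 2 _ ω).symm)
      rw [hω', LinearMap.smul_apply, LinearMap.smul_apply, hθ.wedgeContraction_map hφ]

/-- Lemma 9.4 (first sequence): the short exact sequence
`0 → A → Λ²H → Λ²H/(A·θ̌) → 0`, where `A → Λ²H` sends `1` to `θ̌ = Σᵢ aᵢ∧bᵢ`,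
admits an `Sp(H_A)`-equivariant `A`-linear splitting (equivalently an
`Sp(H_A)`-invariant retraction `r : Λ²H → A` with `r(θ̌) = 1`) if and only if
`g` is a unit in `A`. -/
theorem wedge_squared_splits_iff_isUnit (A : Type*) [CommRing A] [IsDomain A]
    [CharZero A] (g : ℕ) (hg : 1 ≤ g)
    (H : Type*) [AddCommGroup H] [Module A H]
    (bas : Module.Basis (Fin g ⊕ Fin g) A H)
    (θ : H →ₗ[A] H →ₗ[A] A)
    (hθalt : ∀ x : H, θ x x = 0)
    (hab : ∀ i j, θ (bas (Sum.inl i)) (bas (Sum.inr j)) = if i = j then 1 else 0)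
    (haa : ∀ i j, θ (bas (Sum.inl i)) (bas (Sum.inl j)) = 0)
    (hbb : ∀ i j, θ (bas (Sum.inr i)) (bas (Sum.inr j)) = 0)
    (θdual : ⋀[A]^2 H)
    (hθdual : (θdual : ExteriorAlgebra A H) =
      ∑ i : Fin g, ιMulti A 2 ![bas (Sum.inl i), bas (Sum.inr i)]) :
    (∃ r : (⋀[A]^2 H) →ₗ[A] A,
        r θdual = 1 ∧
        ∀ φ : H ≃ₗ[A] H, (∀ x y : H, θ (φ x) (φ y) = θ x y) →
          ∀ ω ω' : ⋀[A]^2 H,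
            (ω' : ExteriorAlgebra A H) =
              ExteriorAlgebra.map (φ : H →ₗ[A] H) (ω : ExteriorAlgebra A H) →
            r ω' = r ω) ↔
      IsUnit (g : A) :=
  wedge_squared_splits_iff_isUnit_general A g H bas θ hθalt hab haa hbb θdual hθdual
end
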